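/- For every integer n ≥ 2 and every real r > 1, the double integral ∫_0^r ∫_0^ρ (sinh t / sinh ρ)^{n−1} dt dρ is at most 1/2 + (r−1)/((n−1)·(1−e^{−2})^{n−1}). In particular this quantity is O(r) as r → ∞, so the two-sided bound comparable to r² for the torsion function of hyperbolic balls fails to hold uniformly for all radii. (Remark 4.2.) -/

import Mathlib

/-!
Write `k = n - 1`. Since `|sinh t| ≤ |sinh ρ|` for `|t| ≤ |ρ|`, the inner integral is at most `ρ`,
which contributes `1/2` over `ρ ∈ [0, 1]`. For `ρ ≥ 1` the bounds `sinh t ≤ e^t/2` and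
`sinh ρ ≥ (1 - e⁻²) e^ρ/2` dominate the integrand by `e^{k(t-ρ)} / (1 - e⁻²)ᵏ`, whose integral over
`t ≤ ρ` is at most `1 / (k (1 - e⁻²)ᵏ)` uniformly in `ρ`; integrating over `[1, r]` gives the
linear term.
-/

open Real MeasureTheory intervalIntegral Set

namespace Real

lemma sinh_le_exp_div_two (t : ℝ) : sinh t ≤ exp t / 2 := by
  rw [sinh_eq]
  linarith [exp_pos (-t)]

lemma one_sub_exp_mul_exp_div_two_le_sinh {c ρ : ℝ} (hcρ : c ≤ ρ) :
    (1 - exp (-2 * c)) * exp ρ / 2 ≤ sinh ρ := by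
  have h : exp (-ρ) ≤ exp (-2 * c) * exp ρ := by
    rw [← exp_add]
    exact exp_le_exp.2 (by linarith)
  rw [sinh_eq]
  linarith

lemma sinh_div_sinh_le_exp_sub_div {c t ρ : ℝ} (hc : 0 < c) (hcρ : c ≤ ρ) :
    sinh t / sinh ρ ≤ exp (t - ρ) / (1 - exp (-2 * c)) := by
  have ha : 0 < 1 - exp (-2 * c) := sub_pos.2 (exp_lt_one_iff.2 (by linarith))
  calc sinh t / sinh ρ ≤ (exp t / 2) / ((1 - exp (-2 * c)) * exp ρ / 2) :=
        div_le_div₀ (by positivity) (sinh_le_exp_div_two t) (by positivity)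
          (one_sub_exp_mul_exp_div_two_le_sinh hcρ)
    _ = exp (t - ρ) / (1 - exp (-2 * c)) := by
        rw [exp_sub]
        field_simp

end Real

lemma integral_exp_mul_sub_le {c : ℝ} (hc : 0 < c) (a b : ℝ) :
    ∫ t in a..b, exp (c * (t - b)) ≤ 1 / c := by
  have hderiv : ∀ t ∈ uIcc a b,
      HasDerivAt (fun t => exp (c * (t - b)) / c) (exp (c * (t - b))) t := fun t _ => by
    simpa [hc.ne'] using (((hasDerivAt_id t).sub_const b).const_mul c).exp.div_const c
  rw [integral_eq_sub_of_hasDerivAt hderiv (Continuous.intervalIntegrable (by fun_prop) _ _)]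
  simp only [sub_self, mul_zero, exp_zero]
  rw [← sub_div]
  exact div_le_div_of_nonneg_right (by linarith [exp_pos (c * (a - b))]) hc.le

section SinhRatio

variable (k : ℕ)

lemma abs_integral_sinh_div_sinh_pow_le (ρ : ℝ) :
    |∫ t in (0:ℝ)..ρ, (sinh t / sinh ρ) ^ k| ≤ |ρ| := by
  have hbound : ∀ t ∈ uIoc 0 ρ, ‖(sinh t / sinh ρ) ^ k‖ ≤ 1 := by
    intro t ht
    have hle : |sinh t| ≤ |sinh ρ| := by
      rw [abs_sinh, abs_sinh, sinh_le_sinh]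
      simpa using abs_sub_left_of_mem_uIcc (uIoc_subset_uIcc ht)
    rw [norm_pow, Real.norm_eq_abs, abs_div]
    exact pow_le_one₀ (by positivity) (div_le_one_of_le₀ hle (abs_nonneg _))
  simpa using norm_integral_le_of_norm_le_const hbound

lemma integral_sinh_div_sinh_pow_le {c ρ : ℝ} (hk : k ≠ 0) (hc : 0 < c) (hcρ : c ≤ ρ) :
    ∫ t in (0:ℝ)..ρ, (sinh t / sinh ρ) ^ k ≤ 1 / (k * (1 - exp (-2 * c)) ^ k) := by
  have hk' : (0 : ℝ) < k := by positivity
  have ha : 0 < 1 - exp (-2 * c) := sub_pos.2 (exp_lt_one_iff.2 (by linarith))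
  calc ∫ t in (0:ℝ)..ρ, (sinh t / sinh ρ) ^ k
      ≤ ∫ t in (0:ℝ)..ρ, exp (k * (t - ρ)) / (1 - exp (-2 * c)) ^ k := by
        refine integral_mono_on (hc.le.trans hcρ) (Continuous.intervalIntegrable (by fun_prop) _ _)
          (Continuous.intervalIntegrable (by fun_prop) _ _) fun t ht => ?_
        calc (sinh t / sinh ρ) ^ k ≤ (exp (t - ρ) / (1 - exp (-2 * c))) ^ k := by
              refine pow_le_pow_left₀ ?_ (sinh_div_sinh_le_exp_sub_div hc hcρ) k
              exact div_nonneg (sinh_nonneg_iff.2 ht.1) (sinh_nonneg_iff.2 (ht.1.trans ht.2))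
          _ = exp (k * (t - ρ)) / (1 - exp (-2 * c)) ^ k := by rw [div_pow, ← exp_nat_mul]
    _ = (∫ t in (0:ℝ)..ρ, exp (k * (t - ρ))) / (1 - exp (-2 * c)) ^ k :=
        intervalIntegral.integral_div _ _
    _ ≤ 1 / k / (1 - exp (-2 * c)) ^ k := by
        gcongr
        exact integral_exp_mul_sub_le hk' 0 ρ
    _ = 1 / (k * (1 - exp (-2 * c)) ^ k) := by rw [div_div]

lemma measurable_integral_sinh_div_sinh_pow :
    Measurable fun ρ => ∫ t in (0:ℝ)..ρ, (sinh t / sinh ρ) ^ k := by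
  simp only [div_pow, intervalIntegral.integral_div]
  refine Measurable.div ?_ (by fun_prop)
  exact (continuous_primitive
    (fun a b => (continuous_sinh.pow k).intervalIntegrable a b) 0).measurable

lemma intervalIntegrable_integral_sinh_div_sinh_pow (a b : ℝ) :
    IntervalIntegrable (fun ρ => ∫ t in (0:ℝ)..ρ, (sinh t / sinh ρ) ^ k) volume a b :=
  (continuous_abs.intervalIntegrable a b).mono_fun'
    (measurable_integral_sinh_div_sinh_pow k).aestronglyMeasurable
    (ae_of_all _ (abs_integral_sinh_div_sinh_pow_le k))

end SinhRatio

/-- **Remark 4.2 (linear growth for large radii).** For every integer `n ≥ 2`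
and every real `r > 1`,
`∫_0^r ∫_0^ρ (sinh t / sinh ρ)^{n−1} dt dρ ≤ 1/2 + (r−1)/((n−1)(1−e^{−2})^{n−1})`.
In particular this quantity is `O(r)` as `r → ∞`, so the two-sided bound
comparable to `r²` for the torsion function of hyperbolic balls fails to hold
uniformly for all radii. -/
theorem hyperbolic_torsion_integral_linear_growth (n : ℕ) (hn : 2 ≤ n)
    (r : ℝ) (hr : 1 < r) :
    (∫ ρ in (0:ℝ)..r, ∫ t in (0:ℝ)..ρ, (Real.sinh t / Real.sinh ρ) ^ (n - 1)) ≤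
      1 / 2 + (r - 1) / (((n : ℝ) - 1) * (1 - Real.exp (-2)) ^ (n - 1)) := by
  set k := n - 1
  have hk : (n : ℝ) - 1 = k := (Nat.cast_pred (by omega)).symm
  set f := fun ρ => ∫ t in (0:ℝ)..ρ, (sinh t / sinh ρ) ^ k
  have hint := intervalIntegrable_integral_sinh_div_sinh_pow k
  have hnear : ∫ ρ in (0:ℝ)..1, f ρ ≤ 1 / 2 :=
    calc ∫ ρ in (0:ℝ)..1, f ρ ≤ ∫ ρ in (0:ℝ)..1, ρ :=
          integral_mono_on zero_le_one (hint 0 1) (continuous_id.intervalIntegrable 0 1)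
            fun ρ hρ => (le_abs_self _).trans <|
              (abs_integral_sinh_div_sinh_pow_le k ρ).trans_eq (abs_of_nonneg hρ.1)
      _ = 1 / 2 := by norm_num [integral_id]
  have hfar : ∫ ρ in (1:ℝ)..r, f ρ ≤ (r - 1) / (k * (1 - exp (-2)) ^ k) :=
    calc ∫ ρ in (1:ℝ)..r, f ρ ≤ ∫ ρ in (1:ℝ)..r, 1 / (k * (1 - exp (-2 * 1)) ^ k) :=
          integral_mono_on hr.le (hint 1 r) intervalIntegrable_const
            fun ρ hρ => integral_sinh_div_sinh_pow_le k (by omega) one_pos hρ.1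
      _ = (r - 1) / (k * (1 - exp (-2)) ^ k) := by
        rw [intervalIntegral.integral_const, smul_eq_mul, mul_one, mul_one_div]
  rw [← integral_add_adjacent_intervals (hint 0 1) (hint 1 r), hk]
  linarith
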